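/- Let G₁(X) = (1/D₁) Σ_{d=1}^{D₁} U_d X U_d† be a D₁-regular superoperator on L(H_{N₁}) with ‖G₁(σ)‖ ≤ λ₁‖σ‖ for all traceless σ, and let Ġ₁(X) = U̇ X U̇† where U̇(|a⟩⊗|b⟩) = U_b|a⟩⊗|b⟩. Then for all A = σ ⊗ Ĩ and B = η ⊗ Ĩ with Tr(σ) = 0, we have |⟨Ġ₁(A), B⟩| ≤ λ₁ ‖A‖·‖B‖. -/

import Mathlib

/-!
The lifted unitary `U̇` is the block-diagonal matrix `diag(U₁, …, U_D)`, and `σ ⊗ Ĩ` is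
`D⁻¹ • diag(σ, …, σ)`. Hence `⟨U̇ (σ ⊗ Ĩ) U̇†, η ⊗ Ĩ⟩ = D⁻¹ ⟨G₁ σ, η⟩` while
`‖σ ⊗ Ĩ‖ = ‖σ‖ / √D`, and the claim follows from Cauchy–Schwarz for the Hilbert–Schmidt
inner product (identified with the Euclidean one on vectorised matrices) and the
contraction of `G₁` on traceless matrices.
-/

open Matrix Kronecker BigOperators

/-- Frobenius (Hilbert–Schmidt) norm ‖X‖ = √Tr(X Xᴴ). -/
noncomputable def frob {n : Type*} [Fintype n] (X : Matrix n n ℂ) : ℝ :=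
  Real.sqrt ((Matrix.trace (X * Xᴴ)).re)

/-- Hilbert–Schmidt inner product ⟨X, Y⟩ = Tr(X Yᴴ). -/
noncomputable def hsInner {n : Type*} [Fintype n] (X Y : Matrix n n ℂ) : ℂ :=
  Matrix.trace (X * Yᴴ)

/-- The completely mixed state Ĩ = I / dim. -/
noncomputable def mixedState (n : Type*) [Fintype n] [DecidableEq n] :
    Matrix n n ℂ :=
  ((Fintype.card n : ℂ)⁻¹) • (1 : Matrix n n ℂ)

/-- `G` is an (dim n, D, λ) quantum expander: it is an average of `D` unitary
conjugations, fixes the completely mixed state, and shrinks every `X`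
Hilbert–Schmidt-orthogonal to the mixed state by a factor `lam`. -/
def IsQExpander {n : Type*} [Fintype n] [DecidableEq n] (D : ℕ) (lam : ℝ)
    (G : Matrix n n ℂ → Matrix n n ℂ) : Prop :=
  (∃ U : Fin D → Matrix n n ℂ, (∀ d, U d ∈ Matrix.unitaryGroup n ℂ) ∧
      ∀ X, G X = (D : ℂ)⁻¹ • ∑ d, U d * X * (U d)ᴴ) ∧
  G (mixedState n) = mixedState n ∧
  ∀ X, hsInner X (mixedState n) = 0 → frob (G X) ≤ lam * frob X

/-- The lifted unitary U̇ on H_{N₁} ⊗ H_{D₁}, with U̇(|a⟩⊗|b⟩) = U_b|a⟩⊗|b⟩,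
as a matrix. -/
def liftedU {N₁ D₁ : ℕ} (U : Fin D₁ → Matrix (Fin N₁) (Fin N₁) ℂ) :
    Matrix (Fin N₁ × Fin D₁) (Fin N₁ × Fin D₁) ℂ :=
  fun p q => if p.2 = q.2 then U p.2 p.1 q.1 else 0

section HilbertSchmidt

variable {n o : Type*} [Fintype n] [Fintype o]

lemma hsInner_eq_inner_toLp_vec (X Y : Matrix n n ℂ) :
    hsInner X Y = inner ℂ (WithLp.toLp 2 (vec Y)) (WithLp.toLp 2 (vec X)) := by
  rw [hsInner, trace_mul_comm, ← star_vec_dotProduct_vec, EuclideanSpace.inner_toLp_toLp,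
    dotProduct_comm]

lemma frob_eq_sqrt_re_hsInner (X : Matrix n n ℂ) : frob X = √(hsInner X X).re := rfl

lemma frob_eq_norm_toLp_vec (X : Matrix n n ℂ) : frob X = ‖WithLp.toLp 2 (vec X)‖ := by
  rw [frob_eq_sqrt_re_hsInner, hsInner_eq_inner_toLp_vec, norm_eq_sqrt_re_inner (𝕜 := ℂ)]
  rfl

lemma frob_nonneg (X : Matrix n n ℂ) : 0 ≤ frob X := Real.sqrt_nonneg _

lemma norm_hsInner_le (X Y : Matrix n n ℂ) : ‖hsInner X Y‖ ≤ frob X * frob Y := by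
  rw [hsInner_eq_inner_toLp_vec, frob_eq_norm_toLp_vec, frob_eq_norm_toLp_vec, mul_comm]
  exact norm_inner_le_norm _ _

lemma frob_smul (c : ℂ) (X : Matrix n n ℂ) : frob (c • X) = ‖c‖ * frob X := by
  rw [frob_eq_norm_toLp_vec, frob_eq_norm_toLp_vec, vec_smul, WithLp.toLp_smul, norm_smul]

lemma hsInner_smul_left (a : ℂ) (X Y : Matrix n n ℂ) :
    hsInner (a • X) Y = a * hsInner X Y := by
  rw [hsInner, Matrix.smul_mul, trace_smul, smul_eq_mul, hsInner]

lemma hsInner_smul_right (b : ℂ) (X Y : Matrix n n ℂ) :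
    hsInner X (b • Y) = star b * hsInner X Y := by
  rw [hsInner, conjTranspose_smul, Matrix.mul_smul, trace_smul, smul_eq_mul, hsInner]

lemma hsInner_sum_left (X : o → Matrix n n ℂ) (Y : Matrix n n ℂ) :
    hsInner (∑ k, X k) Y = ∑ k, hsInner (X k) Y := by
  simp only [hsInner, Finset.sum_mul, trace_sum]

lemma hsInner_blockDiagonal [DecidableEq o] (X Y : o → Matrix n n ℂ) :
    hsInner (blockDiagonal X) (blockDiagonal Y) = ∑ k, hsInner (X k) (Y k) := by
  rw [hsInner, blockDiagonal_conjTranspose, ← blockDiagonal_mul, trace_blockDiagonal]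
  rfl

lemma frob_blockDiagonal_const [DecidableEq o] (X : Matrix n n ℂ) :
    frob (blockDiagonal fun _ : o => X) = √(Fintype.card o) * frob X := by
  rw [frob_eq_sqrt_re_hsInner, frob_eq_sqrt_re_hsInner, hsInner_blockDiagonal,
    Finset.sum_const, Finset.card_univ, nsmul_eq_mul, ← Complex.ofReal_natCast,
    Complex.re_ofReal_mul, Real.sqrt_mul (Nat.cast_nonneg _)]

lemma hsInner_blockDiagonal_conj_const [DecidableEq o] (U : o → Matrix n n ℂ)
    (X Y : Matrix n n ℂ) :
    hsInner (blockDiagonal U * blockDiagonal (fun _ => X) * (blockDiagonal U)ᴴ)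
        (blockDiagonal fun _ => Y) = hsInner (∑ k, U k * X * (U k)ᴴ) Y := by
  rw [blockDiagonal_conjTranspose, ← blockDiagonal_mul, ← blockDiagonal_mul,
    hsInner_blockDiagonal, hsInner_sum_left]

omit [Fintype n] in
lemma kronecker_mixedState [DecidableEq n] [DecidableEq o] (X : Matrix n n ℂ) :
    X ⊗ₖ mixedState o = (Fintype.card o : ℂ)⁻¹ • blockDiagonal fun _ : o => X := by
  ext ⟨a, b⟩ ⟨c, d⟩
  by_cases h : b = d <;>
    simp [h, mixedState, blockDiagonal_apply, one_apply, mul_comm]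

lemma frob_kronecker_mixedState [DecidableEq n] [DecidableEq o] (X : Matrix n n ℂ) :
    frob (X ⊗ₖ mixedState o) = (√(Fintype.card o))⁻¹ * frob X := by
  rw [kronecker_mixedState, frob_smul, frob_blockDiagonal_const, ← mul_assoc, norm_inv,
    Complex.norm_natCast, inv_mul_eq_div, Real.sqrt_div_self', one_div]

end HilbertSchmidt

lemma liftedU_eq_blockDiagonal {N₁ D₁ : ℕ} (U : Fin D₁ → Matrix (Fin N₁) (Fin N₁) ℂ) :
    liftedU U = blockDiagonal U := by
  ext ⟨a, b⟩ ⟨c, d⟩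
  rfl

lemma hsInner_liftedU_conj_kronecker_mixedState {N₁ D₁ : ℕ}
    (U : Fin D₁ → Matrix (Fin N₁) (Fin N₁) ℂ) (σ η : Matrix (Fin N₁) (Fin N₁) ℂ) :
    hsInner (liftedU U * (σ ⊗ₖ mixedState (Fin D₁)) * (liftedU U)ᴴ) (η ⊗ₖ mixedState (Fin D₁)) =
      (D₁ : ℂ)⁻¹ * hsInner ((D₁ : ℂ)⁻¹ • ∑ d, U d * σ * (U d)ᴴ) η := by
  rw [liftedU_eq_blockDiagonal, kronecker_mixedState, kronecker_mixedState, Matrix.mul_smul,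
    Matrix.smul_mul, hsInner_smul_left, hsInner_smul_right, hsInner_blockDiagonal_conj_const,
    hsInner_smul_left, Fintype.card_fin, star_inv₀, star_natCast]

theorem claim_zigzag_parallel_general {N₁ D₁ : ℕ} {lam₁ : ℝ}
    (U : Fin D₁ → Matrix (Fin N₁) (Fin N₁) ℂ)
    (G₁ : Matrix (Fin N₁) (Fin N₁) ℂ → Matrix (Fin N₁) (Fin N₁) ℂ)
    (hG₁ : ∀ X, G₁ X = (D₁ : ℂ)⁻¹ • ∑ d, U d * X * (U d)ᴴ)
    (hcontr : ∀ σ : Matrix (Fin N₁) (Fin N₁) ℂ, Matrix.trace σ = 0 →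
      frob (G₁ σ) ≤ lam₁ * frob σ)
    (σ η : Matrix (Fin N₁) (Fin N₁) ℂ) (hσ : Matrix.trace σ = 0)
    (A B : Matrix (Fin N₁ × Fin D₁) (Fin N₁ × Fin D₁) ℂ)
    (hA : A = σ ⊗ₖ mixedState (Fin D₁)) (hB : B = η ⊗ₖ mixedState (Fin D₁)) :
    ‖hsInner (liftedU U * A * (liftedU U)ᴴ) B‖ ≤
      lam₁ * frob A * frob B := by
  rw [hA, hB, hsInner_liftedU_conj_kronecker_mixedState, ← hG₁, norm_mul, norm_inv,
    Complex.norm_natCast, frob_kronecker_mixedState, frob_kronecker_mixedState, Fintype.card_fin]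
  have hD : (0 : ℝ) ≤ (D₁ : ℝ)⁻¹ := by positivity
  calc (D₁ : ℝ)⁻¹ * ‖hsInner (G₁ σ) η‖
      ≤ (D₁ : ℝ)⁻¹ * (frob (G₁ σ) * frob η) := by gcongr; exact norm_hsInner_le _ _
    _ ≤ (D₁ : ℝ)⁻¹ * (lam₁ * frob σ * frob η) := by
        gcongr
        · exact frob_nonneg η
        · exact hcontr σ hσ
    _ = lam₁ * ((√D₁)⁻¹ * frob σ) * ((√D₁)⁻¹ * frob η) := by
        rw [← Real.sqrt_inv]
        linear_combination (-(lam₁ * frob σ * frob η)) * Real.mul_self_sqrt hD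

/-- Claim (parallel part): for `A = σ ⊗ Ĩ` and `B = η ⊗ Ĩ` with `σ` traceless,
`|⟨Ġ₁(A), B⟩| ≤ λ₁ ‖A‖ ‖B‖`. -/
theorem claim_zigzag_parallel {N₁ D₁ : ℕ} {lam₁ : ℝ}
    (U : Fin D₁ → Matrix (Fin N₁) (Fin N₁) ℂ)
    (hU : ∀ d, U d ∈ Matrix.unitaryGroup (Fin N₁) ℂ)
    (G₁ : Matrix (Fin N₁) (Fin N₁) ℂ → Matrix (Fin N₁) (Fin N₁) ℂ)
    (hG₁ : ∀ X, G₁ X = (D₁ : ℂ)⁻¹ • ∑ d, U d * X * (U d)ᴴ)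
    (hcontr : ∀ σ : Matrix (Fin N₁) (Fin N₁) ℂ, Matrix.trace σ = 0 →
      frob (G₁ σ) ≤ lam₁ * frob σ)
    (σ η : Matrix (Fin N₁) (Fin N₁) ℂ) (hσ : Matrix.trace σ = 0)
    (A B : Matrix (Fin N₁ × Fin D₁) (Fin N₁ × Fin D₁) ℂ)
    (hA : A = σ ⊗ₖ mixedState (Fin D₁)) (hB : B = η ⊗ₖ mixedState (Fin D₁)) :
    ‖hsInner (liftedU U * A * (liftedU U)ᴴ) B‖ ≤
      lam₁ * frob A * frob B :=
  claim_zigzag_parallel_general U G₁ hG₁ hcontr σ η hσ A B hA hB
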